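/- Fix natural numbers p, l1, l2, l3, k1, k2, k3. For every ε > 0 there exists Q such that for every finite field F with |F| ≥ Q and all matrices A1 ∈ F^{p×l1}, A2 ∈ F^{p×l2}, A3 ∈ F^{p×l3} satisfying k1 ≤ rank(A1), k2 ≤ rank(A2), k3 ≤ rank(A3), k1+k2 ≤ rank([A1 | A2]), k1+k3 ≤ rank([A1 | A3]), k2+k3 ≤ rank([A2 | A3]), and k1+k2+k3 ≤ rank([A1 | A2 | A3]), the number of triples (E1, E2, E3) ∈ F^{l1×k1} × F^{l2×k2} × F^{l3×k3} with rank([A1·E1 | A2·E2 | A3·E3]) = k1+k2+k3 is at least (1 − ε) · |F|^{l1·k1 + l2·k2 + l3·k3}. -/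

import Mathlib

/-!
`[A1·E1 | A2·E2 | A3·E3]` drops rank iff some `x = (x1, x2, x3) ≠ 0` has `Σ Aᵢ Eᵢ xᵢ = 0`; these
`x` form a nonzero subspace, so every bad triple `E` lies in the kernel of `E ↦ Σ Aᵢ Eᵢ xᵢ` for at
least `q = |F|` vectors `x`. For fixed `x` the range of that map is `Σ_{xᵢ ≠ 0} range Aᵢ`, whose
dimension is at least `r(x) = Σ_{xᵢ ≠ 0} kᵢ` by the rank conditions, so the kernel has at most
`q ^ (N - r(x))` elements. Summing over `x` gives at most `q ^ N ∏ᵢ (1 + (q ^ kᵢ - 1) / q ^ kᵢ)`,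
which is below `8 q ^ N`; hence at most a fraction `8 / q ≤ ε` of all triples is bad.
-/

open Matrix Module Finset

section General

variable {K : Type*} [Field K]

lemma Matrix.surjective_mulVec_of_ne_zero {m n : Type*} [Fintype n] [DecidableEq n]
    {c : n → K} (hc : c ≠ 0) : Function.Surjective fun M : Matrix m n K => M *ᵥ c := by
  obtain ⟨j, hj⟩ := Function.ne_iff.mp hc
  intro v
  refine ⟨vecMulVec v (Pi.single j (c j)⁻¹), ?_⟩
  simp [vecMulVec_mulVec, single_dotProduct, inv_mul_cancel₀ hj]

lemma Matrix.range_mulVecLin_comp_flip_mulVecBilin [DecidableEq K] {m n p : Type*} [Fintype n]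
    [Fintype p] [DecidableEq p] (A : Matrix m n K) (c : p → K) :
    LinearMap.range (A.mulVecLin ∘ₗ (mulVecBilin K K).flip c) =
      if c = 0 then ⊥ else LinearMap.range A.mulVecLin := by
  split_ifs with hc
  · subst hc; simp
  · refine LinearMap.range_comp_of_range_eq_top _ (LinearMap.range_eq_top.mpr ?_)
    exact surjective_mulVec_of_ne_zero hc

lemma Matrix.range_mulVecLin_fromCols {m n₁ n₂ : Type*} [Fintype n₁] [Fintype n₂]
    (A : Matrix m n₁ K) (B : Matrix m n₂ K) :
    LinearMap.range (fromCols A B).mulVecLin =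
      LinearMap.range A.mulVecLin ⊔ LinearMap.range B.mulVecLin := by
  have : (fromCols A B).mulVecLin =
      (A.mulVecLin.coprod B.mulVecLin) ∘ₗ (LinearEquiv.sumArrowLequivProdArrow n₁ n₂ K K) := by
    ext x; simp [fromCols_mulVec]; rfl
  rw [this, LinearMap.range_comp_of_range_eq_top _ (LinearEquiv.range _), LinearMap.range_coprod]

lemma Matrix.rank_fromCols {m n₁ n₂ : Type*} [Fintype n₁] [Fintype n₂]
    (A : Matrix m n₁ K) (B : Matrix m n₂ K) :
    (fromCols A B).rank =
      finrank K ↥(LinearMap.range A.mulVecLin ⊔ LinearMap.range B.mulVecLin) := by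
  rw [Matrix.rank, range_mulVecLin_fromCols]

lemma Matrix.ker_mulVecLin_ne_bot_of_rank_ne {m n : Type*} [Fintype n] (A : Matrix m n K)
    (hA : A.rank ≠ Fintype.card n) : LinearMap.ker A.mulVecLin ≠ ⊥ := by
  intro h
  rw [Matrix.rank, LinearMap.finrank_range_of_inj (LinearMap.ker_eq_bot.mp h)] at hA
  exact hA (Module.finrank_fintype_fun_eq_card K)

variable {V W : Type*} [AddCommGroup V] [Module K V] [AddCommGroup W] [Module K W]

lemma LinearMap.natCard_ker_mul_natCard_range [Finite V] (f : V →ₗ[K] W) :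
    Nat.card (LinearMap.ker f) * Nat.card (LinearMap.range f) = Nat.card V := by
  rw [natCard_eq_pow_finrank (K := K) (V := LinearMap.ker f),
    natCard_eq_pow_finrank (K := K) (V := LinearMap.range f),
    natCard_eq_pow_finrank (K := K) (V := V), ← pow_add, add_comm, LinearMap.finrank_range_add_finrank_ker]

lemma LinearMap.natCard_ker_eq_card_filter [Fintype V] [DecidableEq W] (f : V →ₗ[K] W) :
    Nat.card (LinearMap.ker f) = #{v | f v = 0} := by
  rw [← Fintype.card_subtype, ← Nat.card_eq_fintype_card]; rfl

variable [Fintype K]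

lemma Submodule.card_le_natCard_of_ne_bot [Finite V] {S : Submodule K V} (hS : S ≠ ⊥) :
    Fintype.card K ≤ Nat.card S := by
  rw [natCard_eq_pow_finrank (K := K), Nat.card_eq_fintype_card]
  exact Nat.le_self_pow (Nat.one_le_iff_ne_zero.mp (Submodule.one_le_finrank_iff.mpr hS)) _

lemma card_mul_card_le_sum_natCard_ker_flip {C : Type*} [AddCommGroup C] [Module K C]
    [Fintype V] [Fintype C] (B : V →ₗ[K] C →ₗ[K] W) (s : Finset V)
    (hs : ∀ v ∈ s, LinearMap.ker (B v) ≠ ⊥) :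
    Fintype.card K * #s ≤ ∑ c, Nat.card (LinearMap.ker (B.flip c)) := by
  classical
  calc Fintype.card K * #s = ∑ v ∈ s, Fintype.card K := by rw [sum_const, smul_eq_mul, mul_comm]
    _ ≤ ∑ v ∈ s, Nat.card (LinearMap.ker (B v)) :=
        sum_le_sum fun v hv => Submodule.card_le_natCard_of_ne_bot (hs v hv)
    _ ≤ ∑ v, Nat.card (LinearMap.ker (B v)) := sum_le_sum_of_subset (subset_univ s)
    _ = ∑ c, Nat.card (LinearMap.ker (B.flip c)) := by
        simp only [LinearMap.natCard_ker_eq_card_filter, card_filter]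
        exact sum_comm

end General

lemma sum_ite_eq_inv_card_le_two {α : Type*} [Fintype α] [DecidableEq α] (a : α) :
    ∑ u, (if u = a then (1 : ℝ) else (Fintype.card α : ℝ)⁻¹) ≤ 2 := by
  have hα : (Fintype.card α : ℝ) ≠ 0 := Nat.cast_ne_zero.mpr (Fintype.card_pos_iff.mpr ⟨a⟩).ne'
  calc ∑ u, (if u = a then (1 : ℝ) else (Fintype.card α : ℝ)⁻¹)
      ≤ ∑ u, ((if u = a then 1 else 0) + (Fintype.card α : ℝ)⁻¹) := by
        gcongr with u; split_ifs <;> simp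
    _ = 2 := by simp [sum_add_distrib, mul_inv_cancel₀ hα, one_add_one_eq_two]

lemma Fintype.sum_sumArrow {α β γ M : Type*} [Fintype α] [Fintype β] [Fintype γ] [DecidableEq α]
    [DecidableEq β] [AddCommMonoid M] (g : (α → γ) → (β → γ) → M) :
    ∑ x : α ⊕ β → γ, g (x ∘ Sum.inl) (x ∘ Sum.inr) = ∑ a, ∑ b, g a b := by
  rw [← Fintype.sum_prod_type']
  exact Fintype.sum_equiv (Equiv.sumArrowEquivProdArrow α β γ) _ _ fun _ => rfl

section BlockSupport

variable {F : Type*} [Zero F] [DecidableEq F] {k1 k2 k3 : ℕ}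

def blockSupportRank (x : Fin k1 ⊕ Fin k2 ⊕ Fin k3 → F) : ℕ :=
  (if x ∘ Sum.inl = 0 then 0 else k1) + (if x ∘ Sum.inr ∘ Sum.inl = 0 then 0 else k2) +
    (if x ∘ Sum.inr ∘ Sum.inr = 0 then 0 else k3)

lemma sum_inv_pow_blockSupportRank_le [Fintype F] :
    ∑ x : Fin k1 ⊕ Fin k2 ⊕ Fin k3 → F, ((Fintype.card F : ℝ) ^ blockSupportRank x)⁻¹ ≤ 8 := by
  set w : ∀ k, (Fin k → F) → ℝ := fun k u => if u = 0 then 1 else (Fintype.card (Fin k → F) : ℝ)⁻¹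
  have hw : ∀ k (u : Fin k → F), ((Fintype.card F : ℝ) ^ (if u = 0 then 0 else k))⁻¹ = w k u := by
    intro k u; simp only [w]; split_ifs <;> simp
  calc ∑ x : Fin k1 ⊕ Fin k2 ⊕ Fin k3 → F, ((Fintype.card F : ℝ) ^ blockSupportRank x)⁻¹
      = ∑ x : Fin k1 ⊕ Fin k2 ⊕ Fin k3 → F,
          w k1 (x ∘ Sum.inl) * (w k2 (x ∘ Sum.inr ∘ Sum.inl) * w k3 (x ∘ Sum.inr ∘ Sum.inr)) := by
        simp only [blockSupportRank, pow_add, mul_inv, hw, mul_assoc]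
    _ = (∑ a, w k1 a) * ((∑ b, w k2 b) * ∑ c, w k3 c) := by
        refine (Fintype.sum_sumArrow
          (fun a y => w k1 a * (w k2 (y ∘ Sum.inl) * w k3 (y ∘ Sum.inr)))).trans ?_
        simp only [← Finset.mul_sum, Fintype.sum_sumArrow (fun b c => w k2 b * w k3 c),
          Finset.sum_mul_sum]
    _ ≤ 2 * (2 * 2) := by
        gcongr <;> exact sum_ite_eq_inv_card_le_two 0
    _ = 8 := by norm_num

end BlockSupport

section Blocks

variable {F : Type*} [Field F] {p l1 l2 l3 k1 k2 k3 : ℕ}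
  (A1 : Matrix (Fin p) (Fin l1) F) (A2 : Matrix (Fin p) (Fin l2) F)
  (A3 : Matrix (Fin p) (Fin l3) F)

def blockColsMulVec :
    (Matrix (Fin l1) (Fin k1) F × Matrix (Fin l2) (Fin k2) F × Matrix (Fin l3) (Fin k3) F) →ₗ[F]
      (Fin k1 ⊕ Fin k2 ⊕ Fin k3 → F) →ₗ[F] (Fin p → F) :=
  LinearMap.mk₂ F (fun E x => fromCols (A1 * E.1) (fromCols (A2 * E.2.1) (A3 * E.2.2)) *ᵥ x)
    (fun E E' x => by simp [Matrix.mul_add, add_mulVec]; abel)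
    (fun a E x => by simp [smul_mulVec])
    (fun E x y => mulVec_add _ x y)
    (fun a E x => mulVec_smul _ a x)

lemma blockColsMulVec_flip (x : Fin k1 ⊕ Fin k2 ⊕ Fin k3 → F) :
    (blockColsMulVec A1 A2 A3).flip x =
      (A1.mulVecLin ∘ₗ (mulVecBilin F F).flip (x ∘ Sum.inl)).coprod
        ((A2.mulVecLin ∘ₗ (mulVecBilin F F).flip (x ∘ Sum.inr ∘ Sum.inl)).coprod
          (A3.mulVecLin ∘ₗ (mulVecBilin F F).flip (x ∘ Sum.inr ∘ Sum.inr))) := by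
  refine LinearMap.ext fun E => ?_
  simp [blockColsMulVec, ← mulVec_mulVec]
  rfl

lemma range_blockColsMulVec_flip [DecidableEq F] (x : Fin k1 ⊕ Fin k2 ⊕ Fin k3 → F) :
    LinearMap.range ((blockColsMulVec A1 A2 A3).flip x) =
      (if x ∘ Sum.inl = 0 then ⊥ else LinearMap.range A1.mulVecLin) ⊔
        ((if x ∘ Sum.inr ∘ Sum.inl = 0 then ⊥ else LinearMap.range A2.mulVecLin) ⊔
          (if x ∘ Sum.inr ∘ Sum.inr = 0 then ⊥ else LinearMap.range A3.mulVecLin)) := by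
  simp only [blockColsMulVec_flip, LinearMap.range_coprod, range_mulVecLin_comp_flip_mulVecBilin]

structure BlockRankConditions (k1 k2 k3 : ℕ) : Prop where
  rank₁ : k1 ≤ A1.rank
  rank₂ : k2 ≤ A2.rank
  rank₃ : k3 ≤ A3.rank
  rank₁₂ : k1 + k2 ≤ (fromCols A1 A2).rank
  rank₁₃ : k1 + k3 ≤ (fromCols A1 A3).rank
  rank₂₃ : k2 + k3 ≤ (fromCols A2 A3).rank
  rank₁₂₃ : k1 + k2 + k3 ≤ (fromCols A1 (fromCols A2 A3)).rank

variable {A1 A2 A3}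

lemma BlockRankConditions.blockSupportRank_le_finrank_range_flip [DecidableEq F]
    (h : BlockRankConditions A1 A2 A3 k1 k2 k3) (x : Fin k1 ⊕ Fin k2 ⊕ Fin k3 → F) :
    blockSupportRank x ≤
      finrank F (LinearMap.range ((blockColsMulVec A1 A2 A3).flip x)) := by
  obtain ⟨h1, h2, h3, h12, h13, h23, h123⟩ := h
  rw [Matrix.rank_fromCols] at h12 h13 h23
  rw [Matrix.rank_fromCols, range_mulVecLin_fromCols] at h123
  unfold Matrix.rank at h1 h2 h3
  have hrange := range_blockColsMulVec_flip A1 A2 A3 x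
  by_cases hx1 : x ∘ Sum.inl = 0 <;> by_cases hx2 : x ∘ Sum.inr ∘ Sum.inl = 0 <;>
    by_cases hx3 : x ∘ Sum.inr ∘ Sum.inr = 0 <;>
    simp only [blockSupportRank, hx1, hx2, hx3, if_true, if_false, bot_sup_eq, sup_bot_eq,
      add_zero, zero_add] at hrange ⊢ <;> rw [hrange] <;> first | exact Nat.zero_le _ | assumption

variable [Fintype F] [DecidableEq F]

lemma BlockRankConditions.natCard_ker_flip_mul_pow_le (h : BlockRankConditions A1 A2 A3 k1 k2 k3)
    (x : Fin k1 ⊕ Fin k2 ⊕ Fin k3 → F) :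
    Nat.card (LinearMap.ker ((blockColsMulVec A1 A2 A3).flip x)) *
        Fintype.card F ^ blockSupportRank x ≤
      Nat.card (Matrix (Fin l1) (Fin k1) F × Matrix (Fin l2) (Fin k2) F ×
        Matrix (Fin l3) (Fin k3) F) := by
  rw [← LinearMap.natCard_ker_mul_natCard_range ((blockColsMulVec A1 A2 A3).flip x),
    natCard_eq_pow_finrank (K := F) (V := LinearMap.range _), Nat.card_eq_fintype_card (α := F)]
  exact Nat.mul_le_mul_left _
    (Nat.pow_le_pow_right Fintype.card_pos (h.blockSupportRank_le_finrank_range_flip x))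

lemma BlockRankConditions.sum_natCard_ker_flip_le (h : BlockRankConditions A1 A2 A3 k1 k2 k3) :
    ∑ x : Fin k1 ⊕ Fin k2 ⊕ Fin k3 → F,
        Nat.card (LinearMap.ker ((blockColsMulVec A1 A2 A3).flip x)) ≤
      8 * Nat.card (Matrix (Fin l1) (Fin k1) F × Matrix (Fin l2) (Fin k2) F ×
        Matrix (Fin l3) (Fin k3) F) := by
  set N := Nat.card (Matrix (Fin l1) (Fin k1) F × Matrix (Fin l2) (Fin k2) F ×
    Matrix (Fin l3) (Fin k3) F)
  have hker : ∀ x, (Nat.card (LinearMap.ker ((blockColsMulVec A1 A2 A3).flip x)) : ℝ) ≤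
      N * ((Fintype.card F : ℝ) ^ blockSupportRank x)⁻¹ := fun x => by
    rw [← div_eq_mul_inv, le_div_iff₀ (by positivity)]
    exact_mod_cast h.natCard_ker_flip_mul_pow_le x
  have : (∑ x, Nat.card (LinearMap.ker ((blockColsMulVec A1 A2 A3).flip x)) : ℝ) ≤ 8 * N :=
    calc _ ≤ ∑ x, N * ((Fintype.card F : ℝ) ^ blockSupportRank x)⁻¹ :=
          sum_le_sum fun x _ => hker x
      _ = N * ∑ x, ((Fintype.card F : ℝ) ^ blockSupportRank x)⁻¹ := (mul_sum ..).symm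
      _ ≤ N * 8 := by gcongr; exact sum_inv_pow_blockSupportRank_le
      _ = 8 * N := mul_comm _ _
  exact_mod_cast this

lemma BlockRankConditions.card_mul_card_rank_ne_le (h : BlockRankConditions A1 A2 A3 k1 k2 k3) :
    Fintype.card F * #{E : Matrix (Fin l1) (Fin k1) F × Matrix (Fin l2) (Fin k2) F ×
        Matrix (Fin l3) (Fin k3) F |
        (fromCols (A1 * E.1) (fromCols (A2 * E.2.1) (A3 * E.2.2))).rank ≠ k1 + k2 + k3} ≤
      8 * Nat.card (Matrix (Fin l1) (Fin k1) F × Matrix (Fin l2) (Fin k2) F ×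
        Matrix (Fin l3) (Fin k3) F) := by
  refine (card_mul_card_le_sum_natCard_ker_flip _ _ fun E hE => ?_).trans h.sum_natCard_ker_flip_le
  refine ker_mulVecLin_ne_bot_of_rank_ne _ ?_
  simpa [add_assoc] using (mem_filter.mp hE).2

end Blocks

/-- For every ε > 0 there is a field-size threshold Q beyond which, for any matrices
A1, A2, A3 satisfying the seven rank conditions, at least a (1 − ε) fraction of the triples
(E1, E2, E3) satisfy rank([A1·E1 | A2·E2 | A3·E3]) = k1 + k2 + k3. -/
theorem card_triple_fullColumnRank_ge (p l1 l2 l3 k1 k2 k3 : ℕ) :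
    ∀ ε : ℝ, 0 < ε → ∃ Q : ℕ, ∀ (F : Type) [Field F] [Fintype F],
      Q ≤ Fintype.card F →
      ∀ (A1 : Matrix (Fin p) (Fin l1) F) (A2 : Matrix (Fin p) (Fin l2) F)
        (A3 : Matrix (Fin p) (Fin l3) F),
        k1 ≤ A1.rank → k2 ≤ A2.rank → k3 ≤ A3.rank →
        k1 + k2 ≤ (Matrix.fromCols A1 A2).rank →
        k1 + k3 ≤ (Matrix.fromCols A1 A3).rank →
        k2 + k3 ≤ (Matrix.fromCols A2 A3).rank →
        k1 + k2 + k3 ≤ (Matrix.fromCols A1 (Matrix.fromCols A2 A3)).rank →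
        (1 - ε) * (Fintype.card F : ℝ) ^ (l1 * k1 + l2 * k2 + l3 * k3) ≤
          (Nat.card {E : Matrix (Fin l1) (Fin k1) F × Matrix (Fin l2) (Fin k2) F ×
              Matrix (Fin l3) (Fin k3) F //
            (Matrix.fromCols (A1 * E.1)
              (Matrix.fromCols (A2 * E.2.1) (A3 * E.2.2))).rank = k1 + k2 + k3} : ℝ) := by
  intro ε hε
  refine ⟨⌈8 / ε⌉₊, fun F _ _ hQ A1 A2 A3 h1 h2 h3 h12 h13 h23 h123 => ?_⟩
  classical
  set N := l1 * k1 + l2 * k2 + l3 * k3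
  set q := Fintype.card F
  set good : Matrix (Fin l1) (Fin k1) F × Matrix (Fin l2) (Fin k2) F × Matrix (Fin l3) (Fin k3) F →
    Prop := fun E => (fromCols (A1 * E.1) (fromCols (A2 * E.2.1) (A3 * E.2.2))).rank = k1 + k2 + k3
  have htotal : Nat.card (Matrix (Fin l1) (Fin k1) F × Matrix (Fin l2) (Fin k2) F ×
      Matrix (Fin l3) (Fin k3) F) = q ^ N := by
    rw [natCard_eq_pow_finrank (K := F), Nat.card_eq_fintype_card (α := F)]
    simp [N, q, Module.finrank_matrix, add_assoc]
  have hbad : (q * #{E | ¬good E} : ℝ) ≤ 8 * q ^ N := by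
    have h : BlockRankConditions A1 A2 A3 k1 k2 k3 := ⟨h1, h2, h3, h12, h13, h23, h123⟩
    exact_mod_cast htotal ▸ h.card_mul_card_rank_ne_le
  have hsplit : (#{E | good E} + #{E | ¬good E} : ℝ) = q ^ N := by
    exact_mod_cast (card_filter_add_card_filter_not good).trans
      (by rw [card_univ, ← Nat.card_eq_fintype_card, htotal])
  have hq : 8 ≤ ε * q := by
    rw [← div_le_iff₀' hε]
    exact Nat.ceil_le.mp hQ
  rw [Nat.card_eq_fintype_card, Fintype.card_subtype]
  have hq0 : (0 : ℝ) < q := by positivity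
  refine le_of_mul_le_mul_left ?_ hq0
  nlinarith [mul_le_mul_of_nonneg_right hq (by positivity : (0 : ℝ) ≤ q ^ N)]
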